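/- The polynomials O_n = ∏_{i ∈ ZMod n} x_i and E_n = ∏_{i ∈ ZMod n} y_i are Casimir functions of the Poisson bracket: {O_n, x_j} = {O_n, y_j} = {E_n, x_j} = {E_n, y_j} = 0 for all j ∈ ZMod n. If moreover n is even, then O_{n/2} = ∏_{i even} x_i + ∏_{i odd} x_i and E_{n/2} = ∏_{i even} y_i + ∏_{i odd} y_i are also Casimir functions: their bracket with every coordinate x_j and y_j vanishes. -/

import Mathlib

open MvPolynomial

/-- The Poisson bracket on polynomials in the corner coordinates `x_i, y_i`
(`Sum.inl i ↦ x_i`, `Sum.inr i ↦ y_i`), determined by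
`{x_i, x_{i+1}} = -x_i x_{i+1}`, `{y_i, y_{i+1}} = y_i y_{i+1}`. -/
noncomputable def pb {n : ℕ} [NeZero n]
    (f g : MvPolynomial (ZMod n ⊕ ZMod n) ℝ) : MvPolynomial (ZMod n ⊕ ZMod n) ℝ :=
  ∑ i : ZMod n,
    (X (Sum.inl i) * X (Sum.inl (i + 1)) *
        (pderiv (Sum.inl (i + 1)) f * pderiv (Sum.inl i) g -
          pderiv (Sum.inl i) f * pderiv (Sum.inl (i + 1)) g) +
      X (Sum.inr i) * X (Sum.inr (i + 1)) *
        (pderiv (Sum.inr i) f * pderiv (Sum.inr (i + 1)) g -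
          pderiv (Sum.inr (i + 1)) f * pderiv (Sum.inr i) g))

/-- `O_n = ∏ x_i`. -/
noncomputable def OnP (n : ℕ) [NeZero n] : MvPolynomial (ZMod n ⊕ ZMod n) ℝ :=
  ∏ i : ZMod n, X (Sum.inl i)

/-- `E_n = ∏ y_i`. -/
noncomputable def EnP (n : ℕ) [NeZero n] : MvPolynomial (ZMod n ⊕ ZMod n) ℝ :=
  ∏ i : ZMod n, X (Sum.inr i)

/-- `O_{n/2} = ∏_{i even} x_i + ∏_{i odd} x_i` (for `n` even). -/
noncomputable def OhalfP (n : ℕ) [NeZero n] : MvPolynomial (ZMod n ⊕ ZMod n) ℝ :=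
  (∏ i ∈ Finset.univ.filter (fun i : ZMod n => Even i.val), X (Sum.inl i)) +
    ∏ i ∈ Finset.univ.filter (fun i : ZMod n => ¬ Even i.val), X (Sum.inl i)

/-- `E_{n/2} = ∏_{i even} y_i + ∏_{i odd} y_i` (for `n` even). -/
noncomputable def EhalfP (n : ℕ) [NeZero n] : MvPolynomial (ZMod n ⊕ ZMod n) ℝ :=
  (∏ i ∈ Finset.univ.filter (fun i : ZMod n => Even i.val), X (Sum.inr i)) +
    ∏ i ∈ Finset.univ.filter (fun i : ZMod n => ¬ Even i.val), X (Sum.inr i)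

/-!
Bracketing with a coordinate only involves its two neighbours:
`{f, x_j} = x_j (x_{j+1} ∂f/∂x_{j+1} - x_{j-1} ∂f/∂x_{j-1})`, and similarly for `y_j`.
On a product of distinct variables the Euler operator `x_k ∂/∂x_k` returns the product if
`x_k` occurs in it and `0` otherwise. So it fixes `O_n`, and on `O_{n/2}` it picks the half
product of the parity of `k`; when `n` is even, `j + 1` and `j - 1` have the same parity, so
the two terms cancel.
-/

namespace MvPolynomial

variable {R σ ι : Type*} [CommSemiring R] [DecidableEq σ] [DecidableEq ι]

theorem X_mul_pderiv_prod_X {e : ι → σ} (he : Function.Injective e) (S : Finset ι) (k : ι) :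
    X (e k) * pderiv (e k) (∏ i ∈ S, (X (e i) : MvPolynomial σ R)) =
      if k ∈ S then ∏ i ∈ S, X (e i) else 0 := by
  induction S using Finset.induction_on with
  | empty => simp
  | insert a s ha ih =>
    rw [Finset.prod_insert ha, pderiv_mul, mul_add, mul_left_comm _ (X (e a)), ih]
    by_cases hk : k = a
    · subst hk
      simp [ha]
    · simp [pderiv_X_of_ne (he.ne (Ne.symm hk)), hk]

theorem X_mul_pderiv_prod_X_add_prod_X [Fintype ι] {e : ι → σ} (he : Function.Injective e)
    (p : ι → Prop) [DecidablePred p] (k : ι) :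
    X (e k) * pderiv (e k) ((∏ i ∈ Finset.univ.filter p, (X (e i) : MvPolynomial σ R)) +
        ∏ i ∈ Finset.univ.filter (fun i => ¬ p i), X (e i)) =
      if p k then ∏ i ∈ Finset.univ.filter p, X (e i)
      else ∏ i ∈ Finset.univ.filter (fun i => ¬ p i), X (e i) := by
  rw [map_add, mul_add, X_mul_pderiv_prod_X he, X_mul_pderiv_prod_X he]
  by_cases hk : p k <;> simp [hk]

theorem pderiv_prod_X_eq_zero {e : ι → σ} (S : Finset ι) {v : σ} (hv : ∀ i, e i ≠ v) :
    pderiv v (∏ i ∈ S, (X (e i) : MvPolynomial σ R)) = 0 := by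
  induction S using Finset.induction_on with
  | empty => simp
  | insert a s ha ih => simp [Finset.prod_insert ha, ih, hv a]

end MvPolynomial

theorem ZMod.even_val_add_two {n : ℕ} [NeZero n] (hn : Even n) (a : ZMod n) :
    Even (a + 2).val ↔ Even a.val := by
  rw [ZMod.val_add, Nat.even_iff, Nat.even_iff, Nat.mod_mod_of_dvd _ hn.two_dvd,
    ZMod.val_two_eq_two_mod, Nat.add_mod, Nat.mod_mod_of_dvd 2 hn.two_dvd]
  simp

section PoissonBracket

variable {n : ℕ} [NeZero n]

theorem pb_X_inl (f : MvPolynomial (ZMod n ⊕ ZMod n) ℝ) (j : ZMod n) :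
    pb f (X (Sum.inl j)) =
      X (Sum.inl j) * X (Sum.inl (j + 1)) * pderiv (Sum.inl (j + 1)) f -
        X (Sum.inl (j - 1)) * X (Sum.inl j) * pderiv (Sum.inl (j - 1)) f := by
  simp [pb, Pi.single_apply, ← sub_eq_iff_eq_add, mul_sub, Finset.sum_sub_distrib]

theorem pb_X_inr (f : MvPolynomial (ZMod n ⊕ ZMod n) ℝ) (j : ZMod n) :
    pb f (X (Sum.inr j)) =
      X (Sum.inr (j - 1)) * X (Sum.inr j) * pderiv (Sum.inr (j - 1)) f -
        X (Sum.inr j) * X (Sum.inr (j + 1)) * pderiv (Sum.inr (j + 1)) f := by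
  simp [pb, Pi.single_apply, ← sub_eq_iff_eq_add, mul_sub, Finset.sum_sub_distrib]

theorem pb_X_inl_eq_zero {f : MvPolynomial (ZMod n ⊕ ZMod n) ℝ} {j : ZMod n}
    (h : X (Sum.inl (j + 1)) * pderiv (Sum.inl (j + 1)) f =
      X (Sum.inl (j - 1)) * pderiv (Sum.inl (j - 1)) f) :
    pb f (X (Sum.inl j)) = 0 := by
  rw [pb_X_inl]
  linear_combination X (Sum.inl j) * h

theorem pb_X_inr_eq_zero {f : MvPolynomial (ZMod n ⊕ ZMod n) ℝ} {j : ZMod n}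
    (h : X (Sum.inr (j + 1)) * pderiv (Sum.inr (j + 1)) f =
      X (Sum.inr (j - 1)) * pderiv (Sum.inr (j - 1)) f) :
    pb f (X (Sum.inr j)) = 0 := by
  rw [pb_X_inr]
  linear_combination -X (Sum.inr j) * h

theorem X_inl_mul_pderiv_OnP (k : ZMod n) :
    X (Sum.inl k) * pderiv (Sum.inl k) (OnP n) = OnP n := by
  simp [OnP, X_mul_pderiv_prod_X Sum.inl_injective]

theorem X_inr_mul_pderiv_EnP (k : ZMod n) :
    X (Sum.inr k) * pderiv (Sum.inr k) (EnP n) = EnP n := by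
  simp [EnP, X_mul_pderiv_prod_X Sum.inr_injective]

theorem pderiv_inr_OnP (k : ZMod n) : pderiv (Sum.inr k) (OnP n) = 0 :=
  pderiv_prod_X_eq_zero _ fun _ => Sum.inl_ne_inr

theorem pderiv_inl_EnP (k : ZMod n) : pderiv (Sum.inl k) (EnP n) = 0 :=
  pderiv_prod_X_eq_zero _ fun _ => Sum.inr_ne_inl

theorem X_inl_mul_pderiv_OhalfP (k : ZMod n) :
    X (Sum.inl k) * pderiv (Sum.inl k) (OhalfP n) =
      if Even k.val then ∏ i ∈ Finset.univ.filter (fun i : ZMod n => Even i.val), X (Sum.inl i)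
      else ∏ i ∈ Finset.univ.filter (fun i : ZMod n => ¬ Even i.val), X (Sum.inl i) :=
  X_mul_pderiv_prod_X_add_prod_X Sum.inl_injective _ k

theorem X_inr_mul_pderiv_EhalfP (k : ZMod n) :
    X (Sum.inr k) * pderiv (Sum.inr k) (EhalfP n) =
      if Even k.val then ∏ i ∈ Finset.univ.filter (fun i : ZMod n => Even i.val), X (Sum.inr i)
      else ∏ i ∈ Finset.univ.filter (fun i : ZMod n => ¬ Even i.val), X (Sum.inr i) :=
  X_mul_pderiv_prod_X_add_prod_X Sum.inr_injective _ k

theorem pderiv_inr_OhalfP (k : ZMod n) : pderiv (Sum.inr k) (OhalfP n) = 0 := by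
  rw [OhalfP, map_add, pderiv_prod_X_eq_zero _ fun _ => Sum.inl_ne_inr,
    pderiv_prod_X_eq_zero _ fun _ => Sum.inl_ne_inr, add_zero]

theorem pderiv_inl_EhalfP (k : ZMod n) : pderiv (Sum.inl k) (EhalfP n) = 0 := by
  rw [EhalfP, map_add, pderiv_prod_X_eq_zero _ fun _ => Sum.inr_ne_inl,
    pderiv_prod_X_eq_zero _ fun _ => Sum.inr_ne_inl, add_zero]

end PoissonBracket

theorem stmt_9 (n : ℕ) [NeZero n] :
    (∀ j : ZMod n,
      pb (OnP n) (X (Sum.inl j)) = 0 ∧ pb (OnP n) (X (Sum.inr j)) = 0 ∧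
      pb (EnP n) (X (Sum.inl j)) = 0 ∧ pb (EnP n) (X (Sum.inr j)) = 0) ∧
    (Even n → ∀ j : ZMod n,
      pb (OhalfP n) (X (Sum.inl j)) = 0 ∧ pb (OhalfP n) (X (Sum.inr j)) = 0 ∧
      pb (EhalfP n) (X (Sum.inl j)) = 0 ∧ pb (EhalfP n) (X (Sum.inr j)) = 0) := by
  refine ⟨fun j => ⟨?_, ?_, ?_, ?_⟩, fun hn j => ?_⟩
  · exact pb_X_inl_eq_zero (by rw [X_inl_mul_pderiv_OnP, X_inl_mul_pderiv_OnP])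
  · exact pb_X_inr_eq_zero (by simp only [pderiv_inr_OnP, mul_zero])
  · exact pb_X_inl_eq_zero (by simp only [pderiv_inl_EnP, mul_zero])
  · exact pb_X_inr_eq_zero (by rw [X_inr_mul_pderiv_EnP, X_inr_mul_pderiv_EnP])
  have parity : Even (j + 1).val ↔ Even (j - 1).val := by
    rw [show j + 1 = j - 1 + 2 by ring, ZMod.even_val_add_two hn]
  refine ⟨?_, ?_, ?_, ?_⟩
  · exact pb_X_inl_eq_zero (by simp only [X_inl_mul_pderiv_OhalfP, parity])
  · exact pb_X_inr_eq_zero (by simp only [pderiv_inr_OhalfP, mul_zero])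
  · exact pb_X_inl_eq_zero (by simp only [pderiv_inl_EhalfP, mul_zero])
  · exact pb_X_inr_eq_zero (by simp only [X_inr_mul_pderiv_EhalfP, parity])
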